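/- arXiv:0806.1818 — 3 statements merged into one kernel-verified Lean document; each statement's English description precedes it below -/
import Mathlib

section
/- For every weight function w : L → ℝ with w ≥ 0 there exists a finitely supported function y from the flats of M to ℝ with y ≥ 0 and a(y)_l ≥ w_l for all l ∈ L, such that the support {F : y_F ≠ 0} is a chain (totally ordered by inclusion) and r(y) ≤ r(y') for every finitely supported y' from the flats of M to ℝ with y' ≥ 0 and a(y')_l ≥ w_l for all l ∈ L. (There is an optimal dual solution whose support is a chain of flats.) -/
/-!
The dual program only sees a flat through its profile (its rank and its degrees at the lines
of `L`), and flats have finitely many profiles. So it is a finite linear program over a set `𝓡`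
of representative flats, and after bounding the total mass its feasible region is compact.
Among the optimal solutions take one maximising `∑ y_F r(F)²`. If two flats `F`, `G` in its
support were not nested, moving mass from `F` and `G` to `F ∩ G` and `cl (F ∪ G)` would keep
feasibility, as degrees are supermodular under this uncrossing, and would not increase the
cost, by submodularity of the rank; by optimality `r(F ∩ G) + r(cl (F ∪ G)) = r(F) + r(G)`.
As `r(cl (F ∪ G))` exceeds both `r(F)` and `r(G)`, the sum of squared ranks then strictly
increases, a contradiction.
-/

open Set

variable {α : Type*}

/-- The rank of a set in a matroid: the supremum of the cardinalities of its
independent subsets. -/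
noncomputable def Matroid.rk' (M : Matroid α) (X : Set α) : ℕ :=
  sSup {n : ℕ | ∃ I, M.Indep I ∧ I ⊆ X ∧ I.ncard = n}

/-- A matroid is loopless if the closure of the empty set is empty. -/
def Matroid.Loopless' (M : Matroid α) : Prop := M.closure ∅ = ∅

/-- A line of a matroid: a subset of the ground set of rank 1 or 2. -/
def Matroid.IsLine (M : Matroid α) (l : Set α) : Prop :=
  l ⊆ M.E ∧ (M.rk' l = 1 ∨ M.rk' l = 2)

open scoped Classical in
/-- Degree `a(X)_l` of a set `X` at a line `l`. -/
noncomputable def deg (X l : Set α) : ℕ :=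
  if X ∩ l = ∅ then 0 else if l ⊆ X then 2 else 1

/-- A fractional matching of the pair `(M, L)`. -/
def IsFracMatching (M : Matroid α) (L : Finset (Set α)) (x : Set α → ℝ) : Prop :=
  (∀ l ∈ L, 0 ≤ x l) ∧
  ∀ F : Set α, M.IsFlat F → ∑ l ∈ L, (deg F l : ℝ) * x l ≤ (M.rk' F : ℝ)

/-- `a(y)_l` for a finitely supported `y` on flats. -/
noncomputable def aDual (y : Set α →₀ ℝ) (l : Set α) : ℝ :=
  y.sum fun F c => c * (deg F l : ℝ)

/-- `r(y)` for a finitely supported `y` on flats. -/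
noncomputable def rDual (M : Matroid α) (y : Set α →₀ ℝ) : ℝ :=
  y.sum fun F c => c * (M.rk' F : ℝ)

namespace Matroid

variable {M : Matroid α} {F G X Y l : Set α} {x y : α}

section Rank

variable [M.RankFinite]

lemma cast_rk' (X : Set α) : (M.rk' X : ℕ∞) = M.eRk X := by
  obtain ⟨I, hI⟩ := M.exists_isBasis' X
  have hmax : IsGreatest {n | ∃ J, M.Indep J ∧ J ⊆ X ∧ J.ncard = n} I.ncard := by
    refine ⟨⟨I, hI.indep, hI.subset, rfl⟩, ?_⟩
    rintro _ ⟨J, hJ, hJX, rfl⟩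
    have hle := hJ.encard_le_eRk_of_subset hJX
    rw [← hI.encard_eq_eRk, ← hJ.finite.cast_ncard_eq, ← hI.indep.finite.cast_ncard_eq] at hle
    exact_mod_cast hle
  rw [Matroid.rk', hmax.csSup_eq, hI.indep.finite.cast_ncard_eq, hI.encard_eq_eRk]

lemma rk'_mono (h : X ⊆ Y) : M.rk' X ≤ M.rk' Y := by
  have h := M.eRk_mono h
  rwa [← cast_rk', ← cast_rk', Nat.cast_le] at h

lemma rk'_closure (X : Set α) : M.rk' (M.closure X) = M.rk' X := by
  have h := M.eRk_closure_eq X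
  rwa [← cast_rk', ← cast_rk', Nat.cast_inj] at h

lemma rk'_inter_add_rk'_union_le (X Y : Set α) :
    M.rk' (X ∩ Y) + M.rk' (X ∪ Y) ≤ M.rk' X + M.rk' Y := by
  have h := M.eRk_inter_add_eRk_union_le X Y
  rwa [← cast_rk', ← cast_rk', ← cast_rk', ← cast_rk', ← Nat.cast_add, ← Nat.cast_add,
    Nat.cast_le] at h

lemma IsFlat.rk'_lt_of_ssubset (hF : M.IsFlat F) (hFY : F ⊂ Y) (hY : Y ⊆ M.E) :
    M.rk' F < M.rk' Y := by
  by_contra! hle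
  have hcl := (M.isRkFinite_set F).closure_eq_closure_of_subset_of_eRk_ge_eRk hFY.subset
    (by rw [← cast_rk', ← cast_rk']; exact_mod_cast hle)
  exact hFY.not_subset (by rw [← hF.closure, hcl]; exact M.subset_closure Y hY)

lemma IsFlat.rk'_lt_rk'_closure_union (hF : M.IsFlat F) (hG : G ⊆ M.E) (hGF : ¬ G ⊆ F) :
    M.rk' F < M.rk' (M.closure (F ∪ G)) := by
  have hFGE : F ∪ G ⊆ M.closure (F ∪ G) := M.subset_closure _ (union_subset hF.subset_ground hG)
  exact hF.rk'_lt_of_ssubset ((subset_union_left.trans hFGE).ssubset_of_not_subset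
    fun h => hGF ((subset_union_right.trans hFGE).trans h)) (M.closure_subset_ground _)

lemma IsFlat.eq_empty_of_rk'_eq_zero [M.Loopless] (hF : M.IsFlat F) (h : M.rk' F = 0) :
    F = ∅ := by
  have h0 : M.eRk F = 0 := by rw [← cast_rk', h, Nat.cast_zero]
  rw [eRk_eq_zero_iff hF.subset_ground, loops_eq_empty] at h0
  exact subset_empty_iff.mp h0

lemma IsLine.nonempty (hl : M.IsLine l) : l.Nonempty := by
  rw [nonempty_iff_ne_empty]
  rintro rfl
  have h0 : M.rk' ∅ = 0 := by exact_mod_cast (cast_rk' (M := M) ∅).trans M.eRk_empty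
  rcases hl.2 with h | h <;> omega

lemma IsLine.subset_closure_insert [M.Loopless] (hl : M.IsLine l) (hF : M.IsFlat F)
    (hxF : x ∈ F) (hxl : x ∈ l) (hyl : y ∈ l) (hyF : y ∉ F) : l ⊆ M.closure (insert y F) := by
  have hxy : x ≠ y := by rintro rfl; exact hyF hxF
  have hindep : M.Indep {y, x} := by
    have hx : M.Indep {x} := indep_singleton.mpr (isNonloop_of_loopless (hF.subset_ground hxF))
    rw [hx.insert_indep_iff_of_notMem (by simpa using hxy.symm)]
    refine ⟨hl.1 hyl, fun hyx => hyF ?_⟩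
    rw [← hF.closure]
    exact M.closure_subset_closure (singleton_subset_iff.mpr hxF) hyx
  have hsub : ({y, x} : Set α) ⊆ l := by
    rintro z (rfl | rfl) <;> assumption
  have hrk : M.eRk l ≤ M.eRk {y, x} := by
    rw [hindep.eRk_eq_encard, encard_pair hxy.symm, ← cast_rk']
    rcases hl.2 with h | h <;> rw [h] <;> norm_num
  have hcl := (M.isRkFinite_set _).closure_eq_closure_of_subset_of_eRk_ge_eRk hsub hrk
  calc l ⊆ M.closure l := M.subset_closure l hl.1
    _ = M.closure {y, x} := hcl.symm
    _ ⊆ M.closure (insert y F) :=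
        M.closure_subset_closure (insert_subset_insert (singleton_subset_iff.mpr hxF))

end Rank

lemma IsFlat.inter (hF : M.IsFlat F) (hG : M.IsFlat G) : M.IsFlat (F ∩ G) := by
  rw [inter_eq_iInter]
  exact IsFlat.iInter fun b => by cases b <;> assumption

end Matroid

section Degree

variable {X Y l : Set α}

lemma deg_eq_zero (h : X ∩ l = ∅) : deg X l = 0 := by
  rw [deg, if_pos h]

lemma deg_eq_one (h : (X ∩ l).Nonempty) (hl : ¬ l ⊆ X) : deg X l = 1 := by
  rw [deg, if_neg h.ne_empty, if_neg hl]

lemma deg_eq_two (hl : l.Nonempty) (h : l ⊆ X) : deg X l = 2 := by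
  rw [deg, if_neg (by rw [inter_eq_right.mpr h]; exact hl.ne_empty), if_pos h]

lemma deg_le_two (X l : Set α) : deg X l ≤ 2 := by
  unfold deg; split_ifs <;> omega

lemma one_le_deg (h : (X ∩ l).Nonempty) : 1 ≤ deg X l := by
  rw [deg, if_neg h.ne_empty]; split_ifs <;> omega

lemma deg_mono (h : X ⊆ Y) (l : Set α) : deg X l ≤ deg Y l := by
  rcases (X ∩ l).eq_empty_or_nonempty with hX | hX
  · rw [deg_eq_zero hX]; exact Nat.zero_le _
  by_cases hlX : l ⊆ X
  · rw [deg_eq_two (hX.mono inter_subset_right) hlX,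
      deg_eq_two (hX.mono inter_subset_right) (hlX.trans h)]
  · rw [deg_eq_one hX hlX]
    exact one_le_deg (hX.mono (inter_subset_inter_left l h))

end Degree

namespace Matroid

variable {M : Matroid α} {F G l : Set α}

lemma deg_add_deg_le [M.RankFinite] [M.Loopless] (hF : M.IsFlat F) (hG : M.IsFlat G)
    (hl : M.IsLine l) : deg F l + deg G l ≤ deg (F ∩ G) l + deg (M.closure (F ∪ G)) l := by
  have hFGE : F ∪ G ⊆ M.E := union_subset hF.subset_ground hG.subset_ground
  have hFV : F ⊆ M.closure (F ∪ G) := subset_union_left.trans (M.subset_closure _ hFGE)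
  have hGV : G ⊆ M.closure (F ∪ G) := subset_union_right.trans (M.subset_closure _ hFGE)
  rcases (F ∩ l).eq_empty_or_nonempty with hFl | ⟨x, hxF, hxl⟩
  · rw [deg_eq_zero hFl]; have := deg_mono hGV l; omega
  rcases (G ∩ l).eq_empty_or_nonempty with hGl | ⟨y, hyG, hyl⟩
  · rw [deg_eq_zero hGl]; have := deg_mono hFV l; omega
  by_cases hFGl : (F ∩ G ∩ l).Nonempty
  · -- all four sets meet `l`, and containing `l` is modular
    obtain ⟨z, ⟨hzF, hzG⟩, hzl⟩ := hFGl
    have hne : l.Nonempty := ⟨z, hzl⟩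
    have hm : 1 ≤ deg (F ∩ G) l := one_le_deg ⟨z, ⟨hzF, hzG⟩, hzl⟩
    have hj : 1 ≤ deg (M.closure (F ∪ G)) l := one_le_deg ⟨z, hFV hzF, hzl⟩
    by_cases hlF : l ⊆ F <;> by_cases hlG : l ⊆ G
    · rw [deg_eq_two hne hlF, deg_eq_two hne hlG, deg_eq_two hne (subset_inter hlF hlG),
        deg_eq_two hne (hlF.trans hFV)]
    · rw [deg_eq_two hne hlF, deg_eq_one ⟨z, hzG, hzl⟩ hlG, deg_eq_two hne (hlF.trans hFV)]
      omega
    · rw [deg_eq_one ⟨z, hzF, hzl⟩ hlF, deg_eq_two hne hlG, deg_eq_two hne (hlG.trans hGV)]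
      omega
    · rw [deg_eq_one ⟨z, hzF, hzl⟩ hlF, deg_eq_one ⟨z, hzG, hzl⟩ hlG]
      omega
  · -- `l` meets `F` and `G` in distinct points, so it lies in their span
    have hyF : y ∉ F := fun hyF => hFGl ⟨y, ⟨hyF, hyG⟩, hyl⟩
    have hxG : x ∉ G := fun hxG => hFGl ⟨x, ⟨hxF, hxG⟩, hxl⟩
    have hlV : l ⊆ M.closure (F ∪ G) := (hl.subset_closure_insert hF hxF hxl hyl hyF).trans
      (M.closure_subset_closure (insert_subset (Or.inr hyG) subset_union_left))
    rw [deg_eq_one ⟨x, hxF, hxl⟩ (fun h => hyF (h hyl)), deg_eq_one ⟨y, hyG, hyl⟩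
      (fun h => hxG (h hxl)), deg_eq_two ⟨x, hxl⟩ hlV]
    omega

end Matroid

section FiniteSupport

variable {ι : Type*} {s : Finset ι}

lemma Finsupp.sum_mul_eq_dotProduct {y : ι →₀ ℝ} (hy : y.support ⊆ s) (g : ι → ℝ) :
    (y.sum fun i c => c * g i) = (fun i : s => y i) ⬝ᵥ fun i => g i := by
  rw [y.sum_of_support_subset hy (fun i c => c * g i) fun _ _ => zero_mul _, dotProduct,
    Finset.sum_coe_sort s fun i => y i * g i]

lemma Finsupp.sum_mapDomain_filter_mul {β : Type*} (y : β →₀ ℝ) (p : β → Prop) [DecidablePred p]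
    (f : β → β) {g : β → ℝ} (hf : ∀ b ∈ y.support, p b → g (f b) = g b)
    (hp : ∀ b ∈ y.support, ¬ p b → g b = 0) :
    (((y.filter p).mapDomain f).sum fun b c => c * g b) = y.sum fun b c => c * g b := by
  have hnot : ((y.filter fun b => ¬ p b).sum fun b c => c * g b) = 0 :=
    Finset.sum_eq_zero fun b hb => by
      obtain ⟨hby, hpb⟩ := Finset.mem_filter.mp hb
      dsimp only
      rw [hp b hby hpb, mul_zero]
  calc (((y.filter p).mapDomain f).sum fun b c => c * g b)
      = (y.filter p).sum fun b c => c * g (f b) :=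
        sum_mapDomain_index (fun _ => zero_mul _) fun _ _ _ => add_mul _ _ _
    _ = (y.filter p).sum fun b c => c * g b :=
        sum_congr fun b hb => by
          obtain ⟨hby, hpb⟩ := Finset.mem_filter.mp hb
          rw [hf b hby hpb]
    _ = y.sum fun b c => c * g b := by rw [← y.sum_filter_add_sum_filter_not p, hnot, add_zero]

open scoped Classical in
noncomputable def extendByZero (z : s → ℝ) : ι →₀ ℝ :=
  (Finsupp.equivFunOnFinite.symm z).extendDomain

@[simp]
lemma extendByZero_apply_coe (z : s → ℝ) (i : s) : extendByZero z i = z i := by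
  simp [extendByZero]

lemma mem_support_extendByZero {z : s → ℝ} {i : ι} :
    i ∈ (extendByZero z).support ↔ ∃ j : s, z j ≠ 0 ∧ ↑j = i := by
  simp [extendByZero, Finsupp.extendDomain_support]

lemma support_extendByZero_subset (z : s → ℝ) : (extendByZero z).support ⊆ s := by
  intro i hi
  obtain ⟨j, -, rfl⟩ := mem_support_extendByZero.mp hi
  exact j.2

lemma extendByZero_nonneg {z : s → ℝ} (hz : 0 ≤ z) (i : ι) : 0 ≤ extendByZero z i := by
  by_cases hi : i ∈ s
  · rw [show extendByZero z i = z ⟨i, hi⟩ from extendByZero_apply_coe z ⟨i, hi⟩]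
    exact hz ⟨i, hi⟩
  · rw [Finsupp.notMem_support_iff.mp fun h => hi (support_extendByZero_subset z h)]

lemma sum_extendByZero (z : s → ℝ) (g : ι → ℝ) :
    ((extendByZero z).sum fun i c => c * g i) = z ⬝ᵥ fun i => g i := by
  rw [Finsupp.sum_mul_eq_dotProduct (support_extendByZero_subset z)]
  simp

end FiniteSupport

section Exchange

variable {ι : Type*} [DecidableEq ι]

lemma dotProduct_exchange [Fintype ι] (z g : ι → ℝ) (ε : ℝ) (a b c d : ι) :
    (z + ε • (Pi.single c 1 + Pi.single d 1 - Pi.single a 1 - Pi.single b 1)) ⬝ᵥ g =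
      z ⬝ᵥ g + ε * (g c + g d - g a - g b) := by
  simp only [add_dotProduct, sub_dotProduct, smul_dotProduct, single_dotProduct, one_mul,
    smul_eq_mul]

lemma exchange_nonneg {z : ι → ℝ} (hz : 0 ≤ z) {a b : ι} (hab : a ≠ b) {ε : ℝ} (hε : 0 ≤ ε)
    (ha : ε ≤ z a) (hb : ε ≤ z b) (c d : ι) :
    0 ≤ z + ε • (Pi.single c 1 + Pi.single d 1 - Pi.single a 1 - Pi.single b 1) := by
  intro i
  have hzi : 0 ≤ z i := hz i
  simp only [Pi.zero_apply, Pi.add_apply, Pi.smul_apply, Pi.sub_apply, Pi.single_apply,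
    smul_eq_mul]
  split_ifs <;> subst_vars <;> first | exact absurd rfl hab | nlinarith

end Exchange

lemma sq_add_sq_lt_of_add_eq {a b c d : ℝ} (h : c + d = a + b) (ha : a < d) (hb : b < d) :
    a ^ 2 + b ^ 2 < c ^ 2 + d ^ 2 := by
  obtain rfl : c = a + b - d := by linarith
  nlinarith [mul_pos (sub_pos.2 ha) (sub_pos.2 hb)]

lemma IsCompact.exists_isMinOn_isMaxOn {X : Type*} [TopologicalSpace X] {K : Set X}
    (hK : IsCompact K) (hne : K.Nonempty) {f g : X → ℝ} (hf : Continuous f)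
    (hg : ContinuousOn g K) : ∃ x ∈ K, IsMinOn f K x ∧ IsMaxOn g (K ∩ f ⁻¹' {f x}) x := by
  obtain ⟨x₀, hx₀, hmin⟩ := hK.exists_isMinOn hne hf.continuousOn
  obtain ⟨x, ⟨hx, hfx⟩, hmax⟩ := (hK.inter_right (isClosed_singleton.preimage hf)).exists_isMaxOn
    ⟨x₀, hx₀, rfl⟩ (hg.mono inter_subset_left)
  rw [mem_preimage, mem_singleton_iff] at hfx
  exact ⟨x, hx, fun y hy => hfx ▸ hmin hy, hfx ▸ hmax⟩

namespace Matroid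

variable {M : Matroid α} {L : Finset (Set α)} {w : Set α → ℝ} {𝓡 : Finset (Set α)} {B : ℝ}
  {F R l : Set α}

noncomputable def profile (M : Matroid α) (L : Finset (Set α)) (F : Set α) : ℕ × (L → ℕ) :=
  (M.rk' F, fun l => deg F l)

lemma rk'_eq_of_profile_eq (h : M.profile L R = M.profile L F) : M.rk' R = M.rk' F :=
  congrArg Prod.fst h

lemma deg_eq_of_profile_eq (h : M.profile L R = M.profile L F) (hl : l ∈ L) :
    deg R l = deg F l :=
  congrFun (congrArg Prod.snd h) ⟨l, hl⟩

lemma finite_profile_image [M.RankFinite] (L : Finset (Set α)) :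
    (M.profile L '' {F | M.IsFlat F}).Finite := by
  refine ((finite_Iic (M.rk' M.E)).prod (Finite.pi fun _ => finite_Iic 2)).subset ?_
  rintro _ ⟨F, hF, rfl⟩
  exact ⟨rk'_mono hF.subset_ground, fun l _ => deg_le_two F l⟩

lemma exists_finset_profile_eq [M.RankFinite] (L : Finset (Set α)) :
    ∃ 𝓡 : Finset (Set α), (∀ R ∈ 𝓡, M.IsFlat R) ∧
      ∀ F, M.IsFlat F → ∃ R ∈ 𝓡, M.profile L R = M.profile L F := by
  obtain ⟨𝓡, h𝓡, hbij⟩ := exists_subset_bijOn {F | M.IsFlat F} (M.profile L)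
  have hfin : 𝓡.Finite :=
    Finite.of_finite_image (hbij.image_eq ▸ finite_profile_image L) hbij.injOn
  refine ⟨hfin.toFinset, fun R hR => h𝓡 (hfin.mem_toFinset.mp hR), fun F hF => ?_⟩
  obtain ⟨R, hR, hRF⟩ := hbij.surjOn ⟨F, hF, rfl⟩
  exact ⟨R, hfin.mem_toFinset.mpr hR, hRF⟩

/-- Flats of rank zero are dropped, so that the total mass of `y'` is at most its cost. -/
lemma exists_supported_aDual_eq_rDual_eq [M.RankFinite] [M.Loopless]
    (h𝓡 : ∀ F, M.IsFlat F → ∃ R ∈ 𝓡, M.profile L R = M.profile L F) {y : Set α →₀ ℝ}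
    (hy0 : ∀ F, 0 ≤ y F) (hyF : ∀ F ∈ y.support, M.IsFlat F) :
    ∃ y' : Set α →₀ ℝ, (∀ F, 0 ≤ y' F) ∧ (∀ F ∈ y'.support, F ∈ 𝓡 ∧ M.rk' F ≠ 0) ∧
      (∀ l ∈ L, aDual y' l = aDual y l) ∧ rDual M y' = rDual M y := by
  classical
  choose! rep hrep𝓡 hrep using h𝓡
  set y₀ := y.filter fun F => M.rk' F ≠ 0
  refine ⟨y₀.mapDomain rep, fun F => ?_, fun F hF => ?_, fun l hl => ?_, ?_⟩
  · have hy₀ : 0 ≤ y₀ := Finsupp.le_def.mpr fun F => by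
      rw [Finsupp.filter_apply]; split_ifs; exacts [hy0 F, le_rfl]
    exact Finsupp.le_def.mp (Finsupp.mapDomain_nonneg hy₀) F
  · obtain ⟨F₀, hF₀, rfl⟩ := Finset.mem_image.mp (Finsupp.mapDomain_support hF)
    obtain ⟨hF₀y, hF₀0⟩ := Finset.mem_filter.mp hF₀
    have hF₀flat := hyF F₀ hF₀y
    exact ⟨hrep𝓡 F₀ hF₀flat, (rk'_eq_of_profile_eq (hrep F₀ hF₀flat)).trans_ne hF₀0⟩
  · refine y.sum_mapDomain_filter_mul _ rep (fun F hF _ => ?_) fun F hF h0 => ?_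
    · rw [deg_eq_of_profile_eq (hrep F (hyF F hF)) hl]
    · rw [(hyF F hF).eq_empty_of_rk'_eq_zero (not_not.mp h0), deg_eq_zero (empty_inter l),
        Nat.cast_zero]
  · refine y.sum_mapDomain_filter_mul _ rep (fun F hF _ => ?_) fun F _ h0 => ?_
    · rw [rk'_eq_of_profile_eq (hrep F (hyF F hF))]
    · rw [not_not.mp h0, Nat.cast_zero]

noncomputable def rkVec (M : Matroid α) (𝓡 : Finset (Set α)) : 𝓡 → ℝ := fun R => M.rk' R

noncomputable def degVec (𝓡 : Finset (Set α)) (l : Set α) : 𝓡 → ℝ := fun R => deg (R : Set α) l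

def boundedDuals (L : Finset (Set α)) (w : Set α → ℝ) (𝓡 : Finset (Set α)) (B : ℝ) :
    Set (𝓡 → ℝ) :=
  {z | 0 ≤ z ∧ (∀ l ∈ L, w l ≤ z ⬝ᵥ degVec 𝓡 l) ∧ z ⬝ᵥ 1 ≤ B}

lemma isCompact_boundedDuals : IsCompact (boundedDuals L w 𝓡 B) := by
  have hcover : IsClosed {z : 𝓡 → ℝ | ∀ l ∈ L, w l ≤ z ⬝ᵥ degVec 𝓡 l} := by
    simp only [Set.ofPred_forall]
    exact isClosed_iInter fun l => isClosed_iInter fun _ =>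
      isClosed_le continuous_const (continuous_id.dotProduct continuous_const)
  have hclosed : IsClosed (boundedDuals L w 𝓡 B) :=
    (isClosed_le continuous_const continuous_id).inter (hcover.inter
      (isClosed_le (continuous_id.dotProduct continuous_const) continuous_const))
  refine (isCompact_univ_pi fun _ => isCompact_Icc (a := 0) (b := B)).of_isClosed_subset
    hclosed ?_
  rintro z ⟨hz0, -, hzB⟩ R -
  refine ⟨hz0 R, le_trans ?_ hzB⟩
  rw [dotProduct_one]
  exact Finset.single_le_sum (fun R _ => hz0 R) (Finset.mem_univ R)

lemma exists_mem_boundedDuals [M.RankFinite] (hL : ∀ l ∈ L, M.IsLine l)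
    (hw : ∀ l ∈ L, 0 ≤ w l) (h𝓡 : ∀ F, M.IsFlat F → ∃ R ∈ 𝓡, M.profile L R = M.profile L F) :
    ∃ z ∈ boundedDuals L w 𝓡 ((∑ l ∈ L, w l) * (M.rk' M.E + 1)),
      z ⬝ᵥ rkVec M 𝓡 ≤ (∑ l ∈ L, w l) * (M.rk' M.E + 1) := by
  classical
  obtain ⟨E', hE'𝓡, hE'⟩ := h𝓡 M.E M.ground_isFlat
  have hc : 0 ≤ ∑ l ∈ L, w l := Finset.sum_nonneg hw
  refine ⟨Pi.single ⟨E', hE'𝓡⟩ (∑ l ∈ L, w l), ⟨Pi.single_nonneg.mpr hc, fun l hl => ?_, ?_⟩, ?_⟩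
  · rw [single_dotProduct, degVec, deg_eq_of_profile_eq hE' hl,
      deg_eq_two (hL l hl).nonempty (hL l hl).1]
    have := Finset.single_le_sum hw hl
    push_cast
    linarith
  · rw [single_dotProduct, Pi.one_apply, mul_one]
    nlinarith
  · rw [single_dotProduct, rkVec, rk'_eq_of_profile_eq hE']
    nlinarith

variable [M.RankFinite] [M.Loopless]

open scoped Classical in
lemma exchange_mem_boundedDuals (hL : ∀ l ∈ L, M.IsLine l) {z : 𝓡 → ℝ}
    (hz : z ∈ boundedDuals L w 𝓡 B) {R R' m j : 𝓡} (hR : M.IsFlat R) (hR' : M.IsFlat R')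
    (hRR' : R ≠ R') (hm : M.profile L m = M.profile L (R ∩ R'))
    (hj : M.profile L j = M.profile L (M.closure (R ∪ R'))) {ε : ℝ} (hε : 0 ≤ ε)
    (hεR : ε ≤ z R) (hεR' : ε ≤ z R') :
    z + ε • (Pi.single m 1 + Pi.single j 1 - Pi.single R 1 - Pi.single R' 1) ∈
      boundedDuals L w 𝓡 B := by
  refine ⟨exchange_nonneg hz.1 hRR' hε hεR hεR' _ _, fun l hl => ?_, ?_⟩
  · have hdeg := deg_add_deg_le hR hR' (hL l hl)
    rw [← deg_eq_of_profile_eq hm hl, ← deg_eq_of_profile_eq hj hl] at hdeg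
    have hdeg' : (deg (R : Set α) l : ℝ) + deg (R' : Set α) l ≤
        deg (m : Set α) l + deg (j : Set α) l := by
      exact_mod_cast hdeg
    rw [dotProduct_exchange]
    simp only [degVec]
    nlinarith [hz.2.1 l hl]
  · rw [dotProduct_exchange]
    simpa using hz.2.2

lemma subset_or_subset_of_isMinOn_of_isMaxOn (hL : ∀ l ∈ L, M.IsLine l)
    (h𝓡flat : ∀ R ∈ 𝓡, M.IsFlat R)
    (h𝓡 : ∀ F, M.IsFlat F → ∃ R ∈ 𝓡, M.profile L R = M.profile L F)
    {z : 𝓡 → ℝ} (hz : z ∈ boundedDuals L w 𝓡 B)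
    (hmin : IsMinOn (· ⬝ᵥ rkVec M 𝓡) (boundedDuals L w 𝓡 B) z)
    (hmax : IsMaxOn (· ⬝ᵥ rkVec M 𝓡 ^ 2)
      (boundedDuals L w 𝓡 B ∩ (· ⬝ᵥ rkVec M 𝓡) ⁻¹' {z ⬝ᵥ rkVec M 𝓡}) z)
    {R R' : 𝓡} (hR : z R ≠ 0) (hR' : z R' ≠ 0) : (R : Set α) ⊆ R' ∨ (R' : Set α) ⊆ R := by
  classical
  by_contra! hnest
  obtain ⟨hRR', hR'R⟩ := hnest
  have hF := h𝓡flat R R.2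
  have hG := h𝓡flat R' R'.2
  obtain ⟨m, hm𝓡, hm⟩ := h𝓡 _ (hF.inter hG)
  obtain ⟨j, hj𝓡, hj⟩ := h𝓡 _ (M.isFlat_closure (R ∪ R' : Set α))
  set ε := min (z R) (z R')
  have hε : 0 < ε := lt_min ((hz.1 R).lt_of_ne' hR) ((hz.1 R').lt_of_ne' hR')
  have hz' := exchange_mem_boundedDuals (m := ⟨m, hm𝓡⟩) (j := ⟨j, hj𝓡⟩) hL hz hF hG
    (fun h => hRR' (by rw [h])) hm hj hε.le (min_le_left _ _) (min_le_right _ _)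
  have hcost := hmin hz'
  simp only [mem_ofPred_eq, dotProduct_exchange, rkVec] at hcost
  have hsub : (M.rk' m : ℝ) + M.rk' j ≤ M.rk' R + M.rk' R' := by
    rw [rk'_eq_of_profile_eq hm, rk'_eq_of_profile_eq hj, rk'_closure]
    exact_mod_cast rk'_inter_add_rk'_union_le _ _
  have htight : (M.rk' m : ℝ) + M.rk' j = M.rk' R + M.rk' R' := by nlinarith
  have hlt : (M.rk' R : ℝ) < M.rk' j := by
    rw [rk'_eq_of_profile_eq hj]
    exact_mod_cast hF.rk'_lt_rk'_closure_union hG.subset_ground hR'R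
  have hlt' : (M.rk' R' : ℝ) < M.rk' j := by
    rw [rk'_eq_of_profile_eq hj, union_comm]
    exact_mod_cast hG.rk'_lt_rk'_closure_union hF.subset_ground hRR'
  -- the exchange keeps the cost but strictly increases `∑ z_R r(R)²`
  have hpot := hmax ⟨hz', by
    simp only [mem_preimage, mem_singleton_iff, dotProduct_exchange, rkVec]
    linear_combination ε * htight⟩
  simp only [mem_ofPred_eq, dotProduct_exchange, Pi.pow_apply, rkVec] at hpot
  nlinarith [mul_pos hε (sub_pos.2 (sq_add_sq_lt_of_add_eq htight hlt hlt'))]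

lemma dotProduct_rkVec_le_rDual
    (h𝓡 : ∀ F, M.IsFlat F → ∃ R ∈ 𝓡, M.profile L R = M.profile L F) {z : 𝓡 → ℝ}
    (hmin : IsMinOn (· ⬝ᵥ rkVec M 𝓡) (boundedDuals L w 𝓡 B) z) (hB : z ⬝ᵥ rkVec M 𝓡 ≤ B)
    {y : Set α →₀ ℝ} (hy0 : ∀ F, 0 ≤ y F) (hyF : ∀ F ∈ y.support, M.IsFlat F)
    (hyw : ∀ l ∈ L, w l ≤ aDual y l) : z ⬝ᵥ rkVec M 𝓡 ≤ rDual M y := by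
  obtain ⟨y', hy'0, hy'𝓡, hy'a, hy'r⟩ := exists_supported_aDual_eq_rDual_eq h𝓡 hy0 hyF
  have hsupp : y'.support ⊆ 𝓡 := fun F hF => (hy'𝓡 F hF).1
  have hcost : (fun R : 𝓡 => y' R) ⬝ᵥ rkVec M 𝓡 = rDual M y := by
    rw [← hy'r]
    exact (Finsupp.sum_mul_eq_dotProduct hsupp fun F => (M.rk' F : ℝ)).symm
  by_cases hyB : rDual M y ≤ B
  swap
  · linarith
  rw [← hcost]
  refine hmin ⟨fun R => hy'0 R, fun l hl => ?_, ?_⟩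
  · calc w l ≤ aDual y' l := hy'a l hl ▸ hyw l hl
      _ = _ := Finsupp.sum_mul_eq_dotProduct hsupp _
  · refine le_trans (Finset.sum_le_sum fun R _ => ?_) (hcost ▸ hyB)
    rw [Pi.one_apply, mul_one, rkVec]
    dsimp only
    by_cases hR : y' R = 0
    · rw [hR, zero_mul]
    · have h1 : (1 : ℝ) ≤ M.rk' R := by
        exact_mod_cast Nat.one_le_iff_ne_zero.mpr (hy'𝓡 R (Finsupp.mem_support_iff.mpr hR)).2
      nlinarith [hy'0 R]

end Matroid

/-- there is an optimal dual solution whose support is a chain of flats. -/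
theorem stmt_1 (M : Matroid α) [M.RankFinite] (hM : M.Loopless')
    (L : Finset (Set α)) (hL : ∀ l ∈ L, M.IsLine l)
    (w : Set α → ℝ) (hw : ∀ l ∈ L, 0 ≤ w l) :
    ∃ y : Set α →₀ ℝ,
      (∀ F, 0 ≤ y F) ∧
      (∀ F ∈ y.support, M.IsFlat F) ∧
      (∀ l ∈ L, w l ≤ aDual y l) ∧
      IsChain (· ⊆ ·) (y.support : Set (Set α)) ∧
      (∀ y' : Set α →₀ ℝ, (∀ F, 0 ≤ y' F) → (∀ F ∈ y'.support, M.IsFlat F) →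
        (∀ l ∈ L, w l ≤ aDual y' l) → rDual M y ≤ rDual M y') := by
  have : M.Loopless := ⟨hM⟩
  obtain ⟨𝓡, h𝓡flat, h𝓡⟩ := M.exists_finset_profile_eq L
  obtain ⟨z₀, hz₀, hz₀B⟩ := Matroid.exists_mem_boundedDuals hL hw h𝓡
  obtain ⟨z, hz, hmin, hmax⟩ := Matroid.isCompact_boundedDuals.exists_isMinOn_isMaxOn ⟨z₀, hz₀⟩
    (continuous_id.dotProduct continuous_const)
    (continuous_id.dotProduct continuous_const).continuousOn
  refine ⟨extendByZero z, extendByZero_nonneg hz.1, fun F hF => ?_, fun l hl => ?_, ?_,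
    fun y' hy'0 hy'F hy'w => ?_⟩
  · obtain ⟨R, -, rfl⟩ := mem_support_extendByZero.mp hF
    exact h𝓡flat R R.2
  · rw [aDual, sum_extendByZero]
    exact hz.2.1 l hl
  · rintro _ hF _ hG -
    obtain ⟨R, hR, rfl⟩ := mem_support_extendByZero.mp hF
    obtain ⟨R', hR', rfl⟩ := mem_support_extendByZero.mp hG
    exact Matroid.subset_or_subset_of_isMinOn_of_isMaxOn hL h𝓡flat h𝓡 hz hmin hmax hR hR'
  · rw [rDual, sum_extendByZero]
    exact Matroid.dotProduct_rkVec_le_rDual h𝓡 hmin ((hmin hz₀).trans hz₀B) hy'0 hy'F hy'w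
end

section
/- Let n ≥ 1 and let D be an n × n integer matrix all of whose entries lie in {0, 1, 2}, such that every column sum of D is at most 2 and det D ≠ 0. Let b ∈ ℤⁿ and let x ∈ ℚⁿ be the unique solution of Dx = b. Then 2x ∈ ℤⁿ, i.e., every entry of x is half-integer. -/
open Set

variable {α : Type*}

/-! The lattice `L = D ℤⁿ` contains every column of `D`, and each column is `0`, `eᵤ` or
`eᵤ + eᵥ`. Along a path of columns `eᵤ + eᵥ` from `i` one finds `eᵢ ± eᵥ ∈ L`. If `2eᵢ ∉ L`, these
signs are consistent (adjacent rows get opposite signs) and vanish on every `eᵤ`-column, so the sign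
vector, extended by `0` off the component of `i`, is a nonzero vector annihilating all columns:
impossible when `det D ≠ 0`. Hence `2eᵢ ∈ L` for all `i`, so `2b = D y` with `y` integral, and
`2x = y`. -/

lemma eq_zero_of_nonneg_of_sum_nonpos {m : Type*} [Fintype m] {c : m → ℤ} (h0 : 0 ≤ c)
    (hc : ∑ k, c k ≤ 0) : c = 0 := by
  have hsum : ∑ k, c k = 0 := le_antisymm hc (Finset.sum_nonneg fun k _ => h0 k)
  funext k
  exact (Finset.sum_eq_zero_iff_of_nonneg fun k _ => h0 k).1 hsum k (Finset.mem_univ k)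

lemma exists_nonneg_sub_single_of_nonneg {m : Type*} [DecidableEq m] {c : m → ℤ} (h0 : 0 ≤ c)
    (hc : c ≠ 0) : ∃ u, 0 ≤ c - Pi.single u 1 := by
  obtain ⟨u, hu⟩ := Function.ne_iff.1 hc
  refine ⟨u, fun k => ?_⟩
  rcases eq_or_ne k u with rfl | hk
  · have := h0 k
    simp only [Pi.zero_apply, Pi.sub_apply, Pi.single_eq_same] at hu this ⊢
    omega
  · simpa [hk] using h0 k

lemma sum_sub_single {m : Type*} [Fintype m] [DecidableEq m] (c : m → ℤ) (u : m) :
    ∑ k, (c - Pi.single u 1 : m → ℤ) k = ∑ k, c k - 1 := by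
  simp

def IsSumOfAtMostTwoSingles {m : Type*} [DecidableEq m] (c : m → ℤ) : Prop :=
  c = 0 ∨ (∃ u, c = Pi.single u 1) ∨ ∃ u v, c = Pi.single u 1 + Pi.single v 1

theorem isSumOfAtMostTwoSingles_of_nonneg_of_sum_le_two {m : Type*} [Fintype m] [DecidableEq m]
    {c : m → ℤ} (h0 : 0 ≤ c) (h2 : ∑ k, c k ≤ 2) : IsSumOfAtMostTwoSingles c := by
  rcases eq_or_ne c 0 with hc | hc
  · exact Or.inl hc
  obtain ⟨u, hu⟩ := exists_nonneg_sub_single_of_nonneg h0 hc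
  rcases eq_or_ne (c - Pi.single u 1) 0 with hd | hd
  · exact Or.inr (Or.inl ⟨u, sub_eq_zero.1 hd⟩)
  obtain ⟨v, hv⟩ := exists_nonneg_sub_single_of_nonneg hu hd
  have hzero := eq_zero_of_nonneg_of_sum_nonpos hv (by simp only [sum_sub_single]; omega)
  rw [sub_sub, sub_eq_zero] at hzero
  exact Or.inr (Or.inr ⟨u, v, hzero⟩)

lemma Submodule.smul_mem_of_forall_single_mem {R m : Type*} [CommSemiring R] [Fintype m]
    [DecidableEq m] {L : Submodule R (m → R)} {k : R} (h : ∀ i, Pi.single i k ∈ L) (b : m → R) :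
    k • b ∈ L := by
  have hb : k • b = ∑ i, b i • Pi.single i k := by
    ext j
    simp [Finset.sum_apply, Pi.single_apply, mul_comm]
  rw [hb]
  exact L.sum_mem fun i _ => L.smul_mem _ (h i)

open Matrix

section Lattice

variable {m : Type*} [DecidableEq m] (L : Submodule ℤ (m → ℤ))

lemma exists_single_add_units_smul_mem_of_reflTransGen {i v : m}
    (h : Relation.ReflTransGen (fun u v => Pi.single u 1 + Pi.single v 1 ∈ L) i v) :
    ∃ ε : ℤˣ, Pi.single i 1 + (ε : ℤ) • Pi.single v 1 ∈ L := by
  induction h with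
  | refl => exact ⟨-1, by simp⟩
  | @tail u w _ huw ih =>
    obtain ⟨ε, hε⟩ := ih
    refine ⟨-ε, ?_⟩
    convert L.sub_mem hε (L.smul_mem (ε : ℤ) huw) using 1
    simp only [Units.val_neg, neg_smul, smul_add]
    abel

theorem exists_ne_zero_dotProduct_eq_zero_of_single_two_notMem [Fintype m] {ι : Type*}
    (c : ι → m → ℤ) (hcL : ∀ j, c j ∈ L) (hc : ∀ j, IsSumOfAtMostTwoSingles (c j)) {i : m}
    (hi : Pi.single i 2 ∉ L) : ∃ ε : m → ℤ, ε ≠ 0 ∧ ∀ j, ε ⬝ᵥ c j = 0 := by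
  classical
  set R := Relation.ReflTransGen (fun u v => Pi.single u 1 + Pi.single v 1 ∈ L) i
  choose! s hs using fun u (hu : R u) => exists_single_add_units_smul_mem_of_reflTransGen L hu
  have two_single_eq : (Pi.single i 2 : m → ℤ) = (2 : ℤ) • Pi.single i 1 := by
    rw [← Pi.single_smul', smul_eq_mul, mul_one]
  have single_notMem : ∀ u, R u → Pi.single u 1 ∉ L := by
    intro u hu hL
    apply hi
    rw [two_single_eq]
    convert L.smul_mem 2 (L.sub_mem (hs u hu) (L.smul_mem (s u : ℤ) hL)) using 2
    abel
  have sign_neg : ∀ u v, R u → Pi.single u 1 + Pi.single v 1 ∈ L → s v = -s u := by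
    intro u v hu huv
    refine Int.units_ne_iff_eq_neg.1 fun hsv => hi ?_
    rw [two_single_eq]
    convert L.sub_mem (L.add_mem (hs u hu) (hs v (hu.tail huv))) (L.smul_mem (s u : ℤ) huv)
      using 1
    rw [hsv]
    module
  have hRi : R i := Relation.ReflTransGen.refl
  refine ⟨fun u => if R u then (s u : ℤ) else 0, Function.ne_iff.2 ⟨i, by simp [hRi]⟩, fun j => ?_⟩
  have hj := hcL j
  rcases hc j with h | ⟨u, h⟩ | ⟨u, v, h⟩ <;> rw [h] at hj ⊢
  · exact dotProduct_zero _
  · have hu : ¬R u := fun hu => single_notMem u hu hj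
    simp [hu]
  · by_cases hu : R u
    · have hv : R v := hu.tail hj
      simp [hu, hv, sign_neg u v hu hj]
    · rw [add_comm] at hj
      have hv : ¬R v := fun hv => hu (hv.tail hj)
      simp [hu, hv]

end Lattice

theorem Matrix.single_two_mem_range_mulVecLin {m n : Type*} [Fintype m] [DecidableEq m]
    [Fintype n] [DecidableEq n] (D : Matrix m n ℤ) (hD : ∀ j, IsSumOfAtMostTwoSingles (D.col j))
    (hrows : ∀ ε : m → ℤ, ε ᵥ* D = 0 → ε = 0) (i : m) :
    Pi.single i 2 ∈ LinearMap.range D.mulVecLin := by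
  by_contra hi
  obtain ⟨ε, hε, hcol⟩ := exists_ne_zero_dotProduct_eq_zero_of_single_two_notMem _ D.col
    (fun j => LinearMap.mem_range.2 ⟨Pi.single j 1, by simp⟩) hD hi
  exact hε (hrows ε (funext hcol))

theorem Matrix.intCast_eq_of_mulVec_eq {m : Type*} [Fintype m] [DecidableEq m]
    {D : Matrix m m ℤ} (hdet : D.det ≠ 0) {y : m → ℤ} {x : m → ℚ}
    (h : (D.map (Int.cast : ℤ → ℚ)) *ᵥ x = fun i => ((D *ᵥ y) i : ℚ)) :
    x = fun i => (y i : ℚ) := by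
  have hcast : (D.map (Int.cast : ℤ → ℚ)) *ᵥ (fun i => (y i : ℚ)) = fun i => ((D *ᵥ y) i : ℚ) :=
    funext fun i => ((Int.castRingHom ℚ).map_mulVec D y i).symm
  have hdet_cast : ((D.det : ℤ) : ℚ) = (D.map (Int.cast : ℤ → ℚ)).det :=
    (Int.castRingHom ℚ).map_det D
  by_contra hne
  refine hdet (Int.cast_eq_zero.1 (hdet_cast.trans (exists_mulVec_eq_zero_iff.1
    ⟨x - fun i => (y i : ℚ), sub_ne_zero.2 hne, ?_⟩)))
  rw [mulVec_sub, h, hcast, sub_self]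

theorem stmt_4_general {n : ℕ} (D : Matrix (Fin n) (Fin n) ℤ)
    (hent : ∀ i j, D i j = 0 ∨ D i j = 1 ∨ D i j = 2)
    (hcol : ∀ j, ∑ i, D i j ≤ 2)
    (hdet : D.det ≠ 0)
    (b : Fin n → ℤ) (x : Fin n → ℚ)
    (hx : (D.map (Int.cast : ℤ → ℚ)).mulVec x = fun i => (b i : ℚ)) :
    ∀ i, ∃ m : ℤ, 2 * x i = (m : ℚ) := by
  have hrange : ∀ i, Pi.single i 2 ∈ LinearMap.range D.mulVecLin :=
    D.single_two_mem_range_mulVecLin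
      (fun j => isSumOfAtMostTwoSingles_of_nonneg_of_sum_le_two
        (fun k => by rcases hent k j with h | h | h <;> simp [h]) (hcol j))
      (fun ε hε => by_contra fun h => hdet (Matrix.exists_vecMul_eq_zero_iff.1 ⟨ε, h, hε⟩))
  obtain ⟨y, hy⟩ := Submodule.smul_mem_of_forall_single_mem hrange b
  have h2x := Matrix.intCast_eq_of_mulVec_eq hdet (y := y) (x := 2 • x) <| by
    rw [Matrix.mulVec_smul, hx, ← Matrix.mulVecLin_apply, hy]
    ext i
    simp
  exact fun i => ⟨y i, by simpa using congrFun h2x i⟩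

/-- a nonsingular {0,1,2}-matrix with column sums at most 2 has a
half-integer solution to `Dx = b` for every integer right-hand side `b`. -/
theorem stmt_4 {n : ℕ} (hn : 1 ≤ n) (D : Matrix (Fin n) (Fin n) ℤ)
    (hent : ∀ i j, D i j = 0 ∨ D i j = 1 ∨ D i j = 2)
    (hcol : ∀ j, ∑ i, D i j ≤ 2)
    (hdet : D.det ≠ 0)
    (b : Fin n → ℤ) (x : Fin n → ℚ)
    (hx : (D.map (Int.cast : ℤ → ℚ)).mulVec x = fun i => (b i : ℚ)) :
    ∀ i, ∃ m : ℤ, 2 * x i = (m : ℚ) :=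
  stmt_4_general D hent hcol hdet b x hx
end

section
/- Let ∅ = F_0 ⊂ F_1 ⊂ ⋯ ⊂ F_k ⊂ F_{k+1} = E be a chain of flats of M and let x ∈ ℝ^L with x ≥ 0 satisfy: for every choice of sets S_0,…,S_k with S_i ⊆ F_{i+1} \ F_i and S_i ∪ F_i a flat of M, one has ∑_{l∈L} a(S_0 ∪ ⋯ ∪ S_k)_l x_l ≤ ∑_{i=0}^{k} (r(S_i ∪ F_i) − r(F_i)). If moreover 2·∑_{l∈L} x_l = r(E), then ∑_{l∈L} a(F_i)_l x_l = r(F_i) for every i = 1,…,k. -/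
open Set

variable {α : Type*}

/-! Choosing `S i = F (i+1) \ F i` for `i < j` and `S i = ∅` otherwise (or the reverse) makes the
union `F j` (resp. `E \ F j`) and makes the rank sum telescope to `r(F j)` (resp.
`r(E) - r(F j)`). A nonempty line `l ⊆ E` has `a(F j)_l + a(E \ F j)_l ≥ 2`, so
`r(E) = 2 ∑ x ≤ a(F j)·x + a(E \ F j)·x ≤ r(E)`, and both bounds are equalities. -/

lemma Matroid.rk'_empty (M : Matroid α) : M.rk' ∅ = 0 := by
  simp [Matroid.rk', Set.subset_empty_iff]

lemma Matroid.IsLine.nonempty_s10 {M : Matroid α} {l : Set α} (hl : M.IsLine l) : l.Nonempty := by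
  rw [Set.nonempty_iff_ne_empty]
  rintro rfl
  rcases hl.2 with h | h <;> simp [M.rk'_empty] at h

lemma two_le_deg_add_deg_diff {X E l : Set α} (hlE : l ⊆ E) (hl : l.Nonempty) :
    2 ≤ deg X l + deg (E \ X) l := by
  obtain ⟨a, ha⟩ := hl
  unfold deg
  split_ifs <;> simp only [Set.eq_empty_iff_forall_notMem, Set.subset_def, Set.mem_inter_iff,
    Set.mem_sdiff, not_forall] at * <;> first | omega | grind

lemma two_mul_sum_le_sum_deg_add_sum_deg_diff {E : Set α} {L : Finset (Set α)} {x : Set α → ℝ}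
    (hL : ∀ l ∈ L, l ⊆ E ∧ l.Nonempty) (hx0 : ∀ l ∈ L, 0 ≤ x l) (X : Set α) :
    2 * ∑ l ∈ L, x l ≤
      ∑ l ∈ L, (deg X l : ℝ) * x l + ∑ l ∈ L, (deg (E \ X) l : ℝ) * x l := by
  rw [Finset.mul_sum, ← Finset.sum_add_distrib]
  refine Finset.sum_le_sum fun l hl => ?_
  have hdeg : (2 : ℝ) ≤ deg X l + deg (E \ X) l := by
    exact_mod_cast two_le_deg_add_deg_diff (hL l hl).1 (hL l hl).2
  nlinarith [hx0 l hl]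

lemma biUnion_Ico_diff_succ {F : ℕ → Set α} {n a b : ℕ} (hF : MonotoneOn F (Set.Iic n))
    (hab : a ≤ b) (hbn : b ≤ n) :
    ⋃ i ∈ Finset.Ico a b, (F (i + 1) \ F i) = F b \ F a := by
  induction b, hab using Nat.le_induction with
  | base => simp
  | succ b hab ih =>
    rw [Nat.Ico_succ_right_eq_insert_Ico hab, Finset.set_biUnion_insert, ih (by omega)]
    exact Set.sdiff_union_sdiff_cancel (hF (by simp; omega) (by simp; omega) (by omega))
      (hF (by simp; omega) (by simp; omega) hab)

section Chain

variable {M : Matroid α} {L : Finset (Set α)} {k : ℕ} {F : ℕ → Set α} {x : Set α → ℝ}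

lemma sum_deg_diff_le_rk'_sub (hFflat : ∀ i ≤ k + 1, M.IsFlat (F i))
    (hF : MonotoneOn F (Set.Iic (k + 1)))
    (hstar : ∀ S : ℕ → Set α,
      (∀ i ≤ k, S i ⊆ F (i+1) \ F i ∧ M.IsFlat (S i ∪ F i)) →
      ∑ l ∈ L, (deg (⋃ i ∈ Finset.range (k+1), S i) l : ℝ) * x l
        ≤ ∑ i ∈ Finset.range (k+1), ((M.rk' (S i ∪ F i) : ℝ) - (M.rk' (F i) : ℝ)))
    {a b : ℕ} (hab : a ≤ b) (hbk : b ≤ k + 1) :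
    ∑ l ∈ L, (deg (F b \ F a) l : ℝ) * x l ≤ (M.rk' (F b) : ℝ) - M.rk' (F a) := by
  classical
  have hstep : ∀ i ≤ k, F i ⊆ F (i + 1) := fun i hi =>
    hF (by simp; omega) (by simp; omega) (by omega)
  let S i := if i ∈ Finset.Ico a b then F (i + 1) \ F i else ∅
  have hS : ∀ i ≤ k, S i ⊆ F (i+1) \ F i ∧ M.IsFlat (S i ∪ F i) := by
    intro i hi
    by_cases h : i ∈ Finset.Ico a b
    · simp only [S, if_pos h, Set.sdiff_union_of_subset (hstep i hi)]
      exact ⟨subset_rfl, hFflat (i + 1) (by omega)⟩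
    · simp only [S, if_neg h, Set.empty_union]
      exact ⟨Set.empty_subset _, hFflat i (by omega)⟩
  have hIco : Finset.Ico a b ⊆ Finset.range (k + 1) := by
    intro i; simp only [Finset.mem_Ico, Finset.mem_range]; omega
  have hunion : ⋃ i ∈ Finset.range (k + 1), S i = F b \ F a := by
    rw [← biUnion_Ico_diff_succ hF hab hbk]
    ext y
    simp only [S, Set.mem_iUnion, exists_prop]
    constructor
    · rintro ⟨i, -, hy⟩
      split_ifs at hy with h
      exacts [⟨i, h, hy⟩, hy.elim]
    · rintro ⟨i, hi, hy⟩
      exact ⟨i, hIco hi, by simpa [hi] using hy⟩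
  have hrank : ∑ i ∈ Finset.range (k + 1), ((M.rk' (S i ∪ F i) : ℝ) - M.rk' (F i))
      = ∑ i ∈ Finset.Ico a b, ((M.rk' (F (i + 1)) : ℝ) - M.rk' (F i)) := by
    rw [← Finset.sum_subset hIco]
    · refine Finset.sum_congr rfl fun i hi => ?_
      simp only [S, if_pos hi, Set.sdiff_union_of_subset (hstep i (by simp at hi; omega))]
    · intro i _ hi
      simp only [S, if_neg hi, Set.empty_union, sub_self]
  have := hstar S hS
  rwa [hunion, hrank, Finset.sum_Ico_sub (f := fun i => (M.rk' (F i) : ℝ)) hab] at this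

end Chain

theorem stmt_10_general (M : Matroid α)
    (L : Finset (Set α)) (hL : ∀ l ∈ L, M.IsLine l)
    (k : ℕ) (F : ℕ → Set α) (hF0 : F 0 = ∅) (hFE : F (k+1) = M.E)
    (hFflat : ∀ i ≤ k+1, M.IsFlat (F i)) (hFmono : ∀ i ≤ k, F i ⊂ F (i+1))
    (x : Set α → ℝ) (hx0 : ∀ l ∈ L, 0 ≤ x l)
    (hstar : ∀ S : ℕ → Set α,
      (∀ i ≤ k, S i ⊆ F (i+1) \ F i ∧ M.IsFlat (S i ∪ F i)) →
      ∑ l ∈ L, (deg (⋃ i ∈ Finset.range (k+1), S i) l : ℝ) * x l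
        ≤ ∑ i ∈ Finset.range (k+1), ((M.rk' (S i ∪ F i) : ℝ) - (M.rk' (F i) : ℝ)))
    (hperf : 2 * ∑ l ∈ L, x l = (M.rk' M.E : ℝ)) :
    ∀ i, 1 ≤ i → i ≤ k →
      ∑ l ∈ L, (deg (F i) l : ℝ) * x l = (M.rk' (F i) : ℝ) := by
  intro j _ hjk
  have hF : MonotoneOn F (Set.Iic (k + 1)) :=
    monotoneOn_of_le_add_one Set.ordConnected_Iic fun i _ _ hi =>
      (hFmono i (by simp at hi; omega)).subset
  have hlow := sum_deg_diff_le_rk'_sub hFflat hF hstar (Nat.zero_le j) (by omega)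
  have hhigh := sum_deg_diff_le_rk'_sub hFflat hF hstar (by omega : j ≤ k + 1) le_rfl
  rw [hF0, Set.sdiff_empty, M.rk'_empty] at hlow
  rw [hFE] at hhigh
  have hcover := two_mul_sum_le_sum_deg_add_sum_deg_diff
    (fun l hl => ⟨(hL l hl).1, (hL l hl).nonempty_s10⟩) hx0 (F j)
  linarith

/-- a perfect fractional matching of `(M⋆𝓕, L)` is tight on every flat
of the chain 𝓕. -/
theorem stmt_10 (M : Matroid α) [M.RankFinite] (hM : M.Loopless')
    (L : Finset (Set α)) (hL : ∀ l ∈ L, M.IsLine l)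
    (k : ℕ) (F : ℕ → Set α) (hF0 : F 0 = ∅) (hFE : F (k+1) = M.E)
    (hFflat : ∀ i ≤ k+1, M.IsFlat (F i)) (hFmono : ∀ i ≤ k, F i ⊂ F (i+1))
    (x : Set α → ℝ) (hx0 : ∀ l ∈ L, 0 ≤ x l)
    (hstar : ∀ S : ℕ → Set α,
      (∀ i ≤ k, S i ⊆ F (i+1) \ F i ∧ M.IsFlat (S i ∪ F i)) →
      ∑ l ∈ L, (deg (⋃ i ∈ Finset.range (k+1), S i) l : ℝ) * x l
        ≤ ∑ i ∈ Finset.range (k+1), ((M.rk' (S i ∪ F i) : ℝ) - (M.rk' (F i) : ℝ)))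
    (hperf : 2 * ∑ l ∈ L, x l = (M.rk' M.E : ℝ)) :
    ∀ i, 1 ≤ i → i ≤ k →
      ∑ l ∈ L, (deg (F i) l : ℝ) * x l = (M.rk' (F i) : ℝ) :=
  stmt_10_general M L hL k F hF0 hFE hFflat hFmono x hx0 hstar hperf
end
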